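/- Prime factorizations of finite connected digraphs with an unlooped vertex are unique up to order and isomorphism of the factors: if G is a finite connected digraph with loops having at least one unlooped vertex, and G ≅ ∏_{i∈Fin k} G_i and G ≅ ∏_{j∈Fin l} H_j where all G_i and all H_j are prime digraphs, then k = l and there is a permutation σ of Fin k with G_i ≅ H_{σ(i)} for every i. -/

import Mathlib

universe u

namespace Digraph

/-- Cartesian product of two digraphs. -/
def boxProd {α β : Type*} (G : Digraph α) (H : Digraph β) : Digraph (α × β) where
  Adj p q := (G.Adj p.1 q.1 ∧ p.2 = q.2) ∨ (p.1 = q.1 ∧ H.Adj p.2 q.2)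

/-- Cartesian product of a family of digraphs. -/
def prodFam {I : Type*} {V : I → Type*} (G : ∀ i, Digraph (V i)) : Digraph (∀ i, V i) where
  Adj u v := ∃ κ, (G κ).Adj (u κ) (v κ) ∧ ∀ i, i ≠ κ → u i = v i

/-- The shadow of a digraph: distinct vertices are adjacent iff there is an arc between them
in some direction. -/
def shadow {α : Type*} (G : Digraph α) : SimpleGraph α where
  Adj a b := a ≠ b ∧ (G.Adj a b ∨ G.Adj b a)
  symm := by
    constructor
    rintro a b ⟨hab, h⟩
    exact ⟨hab.symm, h.symm⟩
  loopless := by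
    constructor
    rintro a ⟨ha, -⟩
    exact ha rfl

/-- A digraph is connected if its shadow is connected. -/
def Connected {α : Type*} (G : Digraph α) : Prop := G.shadow.Connected

/-- Isomorphisms of digraphs. -/
abbrev Iso {α β : Type*} (G : Digraph α) (H : Digraph β) := RelIso G.Adj H.Adj

/-- A digraph is prime w.r.t. the Cartesian product if it is nontrivial, connected, has an
unlooped vertex, and in every representation as a product of two digraphs one factor
has exactly one vertex. -/
def IsPrime {α : Type u} (G : Digraph α) : Prop :=
  G.Connected ∧ Nontrivial α ∧ (∃ v, ¬ G.Adj v v) ∧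
    ∀ {A B : Type u} (GA : Digraph A) (GB : Digraph B),
      Nonempty (G.Iso (GA.boxProd GB)) →
        (Nonempty A ∧ Subsingleton A) ∨ (Nonempty B ∧ Subsingleton B)

/-- The vertex set of the connected component of `a` in the shadow of the product. -/
def weakComponent {I : Type*} {V : I → Type*} (G : ∀ i, Digraph (V i)) (a : ∀ i, V i) :
    Set (∀ i, V i) :=
  {v | (prodFam G).shadow.Reachable a v}

/-- The weak Cartesian product: the induced subdigraph of the Cartesian product on the
connected component (in the shadow) of the vertex `a`. -/
def weakProd {I : Type*} {V : I → Type*} (G : ∀ i, Digraph (V i)) (a : ∀ i, V i) :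
    Digraph (weakComponent G a) where
  Adj u v := (prodFam G).Adj u.1 v.1

end Digraph

/-!
Fix an unlooped vertex `a` of `∏ Gᵢ` and an isomorphism `Φ : ∏ Gᵢ ≅ ∏ Hⱼ`. Shadow distances in
a product are sums of coordinate distances, so the layer of `Gᵢ` through `a` (the vertices that
differ from `a` only in coordinate `i`) is closed under metric betweenness, and so is its image
under `Φ`. A nonempty subset of a finite product that is closed under betweenness is closed under
replacing one coordinate by that of another point, hence is a box `∏ Sⱼ`. Since `a` is unlooped,
`Gᵢ` is isomorphic to its layer and thus to `∏ Hⱼ[Sⱼ]`, and primality of `Gᵢ` leaves a single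
nontrivial `Sⱼ`: `Φ` maps each `G`-layer through `a` into an `H`-layer through `Φ a`. The same
holds for `Φ⁻¹`, the two induced maps of indices are mutually inverse, and `Φ` restricts to an
isomorphism between matched layers.
-/

open Function Set

theorem Set.eq_univ_pi_image_eval_of_update_mem {ι : Type*} [Finite ι] [DecidableEq ι]
    {π : ι → Type*} {S : Set (∀ i, π i)} (hS : S.Nonempty)
    (h : ∀ u ∈ S, ∀ v ∈ S, ∀ i, update u i (v i) ∈ S) :
    S = univ.pi fun i => eval i '' S := by
  have := Fintype.ofFinite ι
  refine Subset.antisymm (fun u hu i _ => ⟨u, hu, rfl⟩) fun c hc => ?_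
  suffices ∀ s : Finset ι, ∃ u ∈ S, ∀ i ∈ s, u i = c i by
    obtain ⟨u, hu, huc⟩ := this Finset.univ
    exact funext (fun i => huc i (Finset.mem_univ i)) ▸ hu
  intro s
  induction s using Finset.induction with
  | empty =>
    obtain ⟨u, hu⟩ := hS
    exact ⟨u, hu, by simp⟩
  | @insert j s _ ih =>
    obtain ⟨u, hu, huc⟩ := ih
    obtain ⟨v, hv, hvc⟩ := hc j (mem_univ j)
    refine ⟨update u j (v j), h u hu v hv j, fun i hi => ?_⟩
    rcases eq_or_ne i j with rfl | hij
    · simpa using hvc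
    · simpa [hij] using huc i (Finset.mem_of_mem_insert_of_ne hi hij)

theorem SimpleGraph.Iso.dist_apply_le {V V' : Type*} {G : SimpleGraph V} {G' : SimpleGraph V'}
    (φ : G ≃g G') (u v : V) : G'.dist (φ u) (φ v) ≤ G.dist u v := by
  by_cases h : G.Reachable u v
  · obtain ⟨p, hp⟩ := h.exists_walk_length_eq_dist
    simpa [hp] using SimpleGraph.dist_le (p.map φ.toHom)
  · rw [SimpleGraph.dist_eq_zero_of_not_reachable (Iso.reachable_iff.not.mpr h)]
    exact Nat.zero_le _

theorem SimpleGraph.Iso.dist_apply {V V' : Type*} {G : SimpleGraph V} {G' : SimpleGraph V'}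
    (φ : G ≃g G') (u v : V) : G'.dist (φ u) (φ v) = G.dist u v :=
  le_antisymm (φ.dist_apply_le u v) (by simpa using φ.symm.dist_apply_le (φ u) (φ v))

namespace Digraph

variable {α β : Type*}

def restrict (G : Digraph α) (s : Set α) : Digraph s where
  Adj x y := G.Adj x y

def Iso.shadow {G : Digraph α} {H : Digraph β} (φ : G.Iso H) : G.shadow ≃g H.shadow where
  toEquiv := φ.toEquiv
  map_rel_iff' := and_congr φ.injective.ne_iff (or_congr φ.map_rel_iff φ.map_rel_iff)

def Iso.restrict {G : Digraph α} {H : Digraph β} (φ : G.Iso H) {s : Set α} {t : Set β}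
    (h : ∀ u, u ∈ s ↔ φ u ∈ t) : (G.restrict s).Iso (H.restrict t) where
  toEquiv := φ.toEquiv.subtypeEquiv h
  map_rel_iff' := φ.map_rel_iff

section prodFam

variable {I : Type*} {X : I → Type*} {K : ∀ i, Digraph (X i)}

lemma shadow_prodFam_adj {u v : ∀ i, X i} :
    (prodFam K).shadow.Adj u v ↔
      ∃ κ, (K κ).shadow.Adj (u κ) (v κ) ∧ ∀ i, i ≠ κ → u i = v i := by
  have hne : ∀ κ, (∀ i, i ≠ κ → u i = v i) → (u ≠ v ↔ u κ ≠ v κ) := by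
    refine fun κ he => ⟨fun h hκ => h (funext fun i => ?_), fun h huv => h (congrFun huv κ)⟩
    rcases eq_or_ne i κ with rfl | hi
    exacts [hκ, he i hi]
  constructor
  · rintro ⟨huv, ⟨κ, h, he⟩ | ⟨κ, h, he⟩⟩
    · exact ⟨κ, ⟨(hne κ he).mp huv, .inl h⟩, he⟩
    · have he' : ∀ i, i ≠ κ → u i = v i := fun i hi => (he i hi).symm
      exact ⟨κ, ⟨(hne κ he').mp huv, .inr h⟩, he'⟩
  · rintro ⟨κ, ⟨huv, h | h⟩, he⟩
    · exact ⟨(hne κ he).mpr huv, .inl ⟨κ, h, he⟩⟩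
    · exact ⟨(hne κ he).mpr huv, .inr ⟨κ, h, fun i hi => (he i hi).symm⟩⟩

lemma not_adj_apply_self_of_prodFam {a : ∀ i, X i} (ha : ¬ (prodFam K).Adj a a) (i : I) :
    ¬ (K i).Adj (a i) (a i) :=
  fun h => ha ⟨i, h, fun _ _ => rfl⟩

def layer (a : ∀ i, X i) (i : I) : Set (∀ i, X i) := {u | ∀ j, j ≠ i → u j = a j}

lemma mem_layer_self (a : ∀ i, X i) (i : I) : a ∈ layer a i := fun _ _ => rfl

lemma update_mem_layer [DecidableEq I] (a : ∀ i, X i) (i : I) (x : X i) :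
    update a i x ∈ layer a i :=
  fun _ hj => update_of_ne hj x a

lemma update_apply_of_mem_layer [DecidableEq I] {a u : ∀ i, X i} {i : I} (hu : u ∈ layer a i) :
    update a i (u i) = u := by
  rw [update_eq_iff]
  exact ⟨rfl, fun j hj => (hu j hj).symm⟩

lemma eq_of_layer_subset_layer [DecidableEq I] {a : ∀ i, X i} {i i' : I} [Nontrivial (X i)]
    (h : layer a i ⊆ layer a i') : i = i' := by
  by_contra hii'
  obtain ⟨x, hx⟩ := exists_ne (a i)
  exact hx (by simpa using h (update_mem_layer a i x) i hii')

lemma prodFam_adj_iff_of_mem_layer {a u v : ∀ i, X i} {i : I}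
    (ha : ∀ j, ¬ (K j).Adj (a j) (a j)) (hu : u ∈ layer a i) (hv : v ∈ layer a i) :
    (prodFam K).Adj u v ↔ (K i).Adj (u i) (v i) := by
  refine ⟨fun ⟨κ, hκ, _⟩ => ?_, fun h => ⟨i, h, fun j hj => (hu j hj).trans (hv j hj).symm⟩⟩
  by_cases hκi : κ = i
  · exact hκi ▸ hκ
  · rw [hu κ hκi, hv κ hκi] at hκ
    exact absurd hκ (ha κ)

def layerIso [DecidableEq I] (K : ∀ i, Digraph (X i)) {a : ∀ i, X i}
    (ha : ∀ j, ¬ (K j).Adj (a j) (a j)) (i : I) :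
    (K i).Iso ((prodFam K).restrict (layer a i)) where
  toFun x := ⟨update a i x, update_mem_layer a i x⟩
  invFun u := u.1 i
  left_inv x := update_self i x a
  right_inv u := Subtype.ext (update_apply_of_mem_layer u.2)
  map_rel_iff' := by
    intro x y
    simpa [restrict] using
      prodFam_adj_iff_of_mem_layer ha (update_mem_layer a i x) (update_mem_layer a i y)

def restrictUnivPiIso (K : ∀ i, Digraph (X i)) (S : ∀ i, Set (X i)) :
    ((prodFam K).restrict (univ.pi S)).Iso (prodFam fun i => (K i).restrict (S i)) where
  toEquiv := Equiv.Set.univPi S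
  map_rel_iff' := by
    intro u v
    simp [prodFam, restrict, Subtype.ext_iff]

def prodFamSplit [DecidableEq I] (K : ∀ i, Digraph (X i)) (j : I) :
    (prodFam K).Iso ((K j).boxProd (prodFam fun t : {t : I // t ≠ j} => K t)) where
  toEquiv := Equiv.piSplitAt j X
  map_rel_iff' := by
    intro u v
    show (boxProd _ _).Adj (Equiv.piSplitAt j X u) (Equiv.piSplitAt j X v) ↔ _
    simp only [Equiv.piSplitAt_apply]
    constructor
    · rintro (⟨h, he⟩ | ⟨he, ⟨τ, hτ, ht⟩⟩)
      · exact ⟨j, h, fun t hts => congrFun he ⟨t, hts⟩⟩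
      · refine ⟨τ.1, hτ, fun t hts => ?_⟩
        rcases eq_or_ne t j with rfl | htj
        · exact he
        · exact ht ⟨t, htj⟩ (fun hh => hts (congrArg Subtype.val hh))
    · rintro ⟨κ, hκ, he⟩
      rcases eq_or_ne κ j with rfl | hne
      · exact Or.inl ⟨hκ, funext fun t => he t.1 t.2⟩
      · exact Or.inr ⟨he j (Ne.symm hne),
          ⟨⟨κ, hne⟩, hκ, fun t ht => he t.1 (fun hh => ht (Subtype.ext hh))⟩⟩

def updateHom [DecidableEq I] (K : ∀ i, Digraph (X i)) (u : ∀ i, X i) (j : I) :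
    (K j).shadow →g (prodFam K).shadow where
  toFun := update u j
  map_rel' {x y} h := shadow_prodFam_adj.mpr ⟨j, by simpa using h, fun i hi => by simp [hi]⟩

lemma updateHom_apply [DecidableEq I] (K : ∀ i, Digraph (X i)) (u : ∀ i, X i) (j : I) (x : X j) :
    updateHom K u j x = update u j x := rfl

lemma exists_walk_length_le_sum_dist [DecidableEq I] (hc : ∀ i, (K i).shadow.Connected)
    (s : Finset I) {u v : ∀ i, X i} (huv : ∀ i, i ∉ s → u i = v i) :
    ∃ q : (prodFam K).shadow.Walk u v, q.length ≤ ∑ i ∈ s, (K i).shadow.dist (u i) (v i) := by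
  induction s using Finset.induction generalizing u with
  | empty => exact ⟨.copy .nil rfl (funext fun i => huv i (Finset.notMem_empty i)), by simp⟩
  | @insert j s hjs ih =>
    obtain ⟨p, hp⟩ := (hc j).exists_walk_length_eq_dist (u j) (v j)
    obtain ⟨q, hq⟩ := ih (u := update u j (v j)) fun i hi => by
      rcases eq_or_ne i j with rfl | hij
      · simp
      · simpa [hij] using huv i (by simp [hi, hij])
    refine ⟨((p.map (updateHom K u j)).copy ((updateHom_apply K u j _).trans (update_eq_self j u))
        (updateHom_apply K u j (v j))).append q, ?_⟩
    have hsum : ∑ i ∈ s, (K i).shadow.dist (update u j (v j) i) (v i) =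
        ∑ i ∈ s, (K i).shadow.dist (u i) (v i) :=
      Finset.sum_congr rfl fun i hi => by rw [update_of_ne (ne_of_mem_of_not_mem hi hjs)]
    rw [Finset.sum_insert hjs, ← hsum, SimpleGraph.Walk.length_append,
      SimpleGraph.Walk.length_copy, SimpleGraph.Walk.length_map, hp]
    omega

end prodFam

section dist

variable {I : Type*} [Fintype I] {X : I → Type*} {K : ∀ i, Digraph (X i)}

lemma sum_dist_le_length (hc : ∀ i, (K i).shadow.Connected) {u v : ∀ i, X i}
    (q : (prodFam K).shadow.Walk u v) : ∑ i, (K i).shadow.dist (u i) (v i) ≤ q.length := by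
  induction q with
  | nil => simp
  | @cons u w v h q ih =>
    obtain ⟨κ, hκ, he⟩ := shadow_prodFam_adj.mp h
    have hstep : ∑ i, (K i).shadow.dist (u i) (w i) = 1 := by
      rw [Finset.sum_eq_single κ (fun i _ hi => by simp [he i hi]) (by simp)]
      exact SimpleGraph.dist_eq_one_iff_adj.mpr hκ
    calc ∑ i, (K i).shadow.dist (u i) (v i)
        ≤ ∑ i, ((K i).shadow.dist (u i) (w i) + (K i).shadow.dist (w i) (v i)) :=
          Finset.sum_le_sum fun i _ => (hc i).dist_triangle
      _ ≤ (SimpleGraph.Walk.cons h q).length := by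
          rw [Finset.sum_add_distrib, hstep, SimpleGraph.Walk.length_cons]
          omega

lemma dist_prodFam (hc : ∀ i, (K i).shadow.Connected) (u v : ∀ i, X i) :
    (prodFam K).shadow.dist u v = ∑ i, (K i).shadow.dist (u i) (v i) := by
  classical
  obtain ⟨q, hq⟩ := exists_walk_length_le_sum_dist hc Finset.univ (u := u) (v := v) (by simp)
  obtain ⟨p, hp⟩ := SimpleGraph.Reachable.exists_walk_length_eq_dist ⟨q⟩
  exact le_antisymm ((SimpleGraph.dist_le q).trans hq) (hp ▸ sum_dist_le_length hc p)

lemma dist_add_dist_update [DecidableEq I] (hc : ∀ i, (K i).shadow.Connected)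
    (u v : ∀ i, X i) (j : I) :
    (prodFam K).shadow.dist u (update u j (v j)) + (prodFam K).shadow.dist (update u j (v j)) v =
      (prodFam K).shadow.dist u v := by
  simp only [dist_prodFam hc, ← Finset.sum_add_distrib]
  refine Finset.sum_congr rfl fun i _ => ?_
  rcases eq_or_ne i j with rfl | hij <;> simp [*]

lemma apply_eq_of_dist_add_dist_eq (hc : ∀ i, (K i).shadow.Connected) {u m v : ∀ i, X i}
    (h : (prodFam K).shadow.dist u m + (prodFam K).shadow.dist m v = (prodFam K).shadow.dist u v)
    {i : I} (hi : u i = v i) : m i = u i := by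
  simp only [dist_prodFam hc, ← Finset.sum_add_distrib] at h
  have := (Finset.sum_eq_sum_iff_of_le fun t _ => (hc t).dist_triangle).mp h.symm i
    (Finset.mem_univ i)
  rw [hi, SimpleGraph.dist_self] at this
  exact (((hc i).dist_eq_zero_iff).mp (by omega)).symm.trans hi.symm

end dist

theorem IsPrime.exists_forall_ne_subsingleton {α : Type u} {P : Digraph α} (hP : P.IsPrime)
    {J : Type} {Y : J → Type u} {K : ∀ j, Digraph (Y j)} (e : P.Iso (prodFam K)) :
    ∃ j, ∀ j', j' ≠ j → Subsingleton (Y j') := by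
  classical
  obtain ⟨-, hα, -, hsplit⟩ := hP
  obtain ⟨j, hj⟩ : ∃ j, Nontrivial (Y j) := by
    by_contra! h
    exact not_subsingleton α e.toEquiv.subsingleton
  refine ⟨j, fun j' hj' => ?_⟩
  rcases hsplit _ _ ⟨e.trans (prodFamSplit K j)⟩ with ⟨-, h⟩ | ⟨⟨f⟩, h⟩
  · exact absurd h (not_subsingleton _)
  · exact (update_injective f ⟨j', hj'⟩).subsingleton

section layers

variable {I J : Type*} [Fintype I] [Fintype J] [DecidableEq J]
  {X : I → Type*} {Y : J → Type*} {K : ∀ i, Digraph (X i)} {L : ∀ j, Digraph (Y j)}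

lemma update_mem_image_layer (hK : ∀ i, (K i).shadow.Connected)
    (hL : ∀ j, (L j).shadow.Connected) (Φ : (prodFam K).Iso (prodFam L)) {a : ∀ i, X i} {i : I}
    {u v : ∀ j, Y j} (hu : u ∈ Φ '' layer a i) (hv : v ∈ Φ '' layer a i) (j : J) :
    update u j (v j) ∈ Φ '' layer a i := by
  obtain ⟨u, hu, rfl⟩ := hu
  obtain ⟨v, hv, rfl⟩ := hv
  set m := update (Φ u) j (Φ v j)
  refine ⟨Φ.symm m, fun t ht => ?_, Φ.apply_symm_apply m⟩
  have hd : ∀ x y, (prodFam L).shadow.dist (Φ x) (Φ y) = (prodFam K).shadow.dist x y :=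
    Φ.shadow.dist_apply
  have hbetween : (prodFam K).shadow.dist u (Φ.symm m) + (prodFam K).shadow.dist (Φ.symm m) v =
      (prodFam K).shadow.dist u v := by
    rw [← hd, ← hd, ← hd, Φ.apply_symm_apply]
    exact dist_add_dist_update hL (Φ u) (Φ v) j
  exact (apply_eq_of_dist_add_dist_eq hK hbetween ((hu t ht).trans (hv t ht).symm)).trans
    (hu t ht)

end layers

theorem exists_mapsTo_layer {I J : Type} [Fintype I] [DecidableEq I] [Fintype J]
    [DecidableEq J]
    {X : I → Type u} {Y : J → Type u} {K : ∀ i, Digraph (X i)} {L : ∀ j, Digraph (Y j)}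
    (hK : ∀ i, (K i).Connected) (hL : ∀ j, (L j).Connected) (Φ : (prodFam K).Iso (prodFam L))
    {a : ∀ i, X i} (ha : ∀ i, ¬ (K i).Adj (a i) (a i)) {i : I} (hi : (K i).IsPrime) :
    ∃ j, MapsTo Φ (layer a i) (layer (Φ a) j) := by
  set T := Φ '' layer a i
  have hT : T = univ.pi fun j => eval j '' T :=
    eq_univ_pi_image_eval_of_update_mem ⟨Φ a, a, mem_layer_self a i, rfl⟩
      fun u hu v hv j => update_mem_image_layer hK hL Φ hu hv j
  have hmem : ∀ u, u ∈ layer a i ↔ Φ u ∈ univ.pi fun j => eval j '' T := fun u => by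
    rw [← hT]
    exact Φ.injective.mem_set_image.symm
  obtain ⟨j, hj⟩ := hi.exists_forall_ne_subsingleton
    ((layerIso K ha i).trans ((Φ.restrict hmem).trans (restrictUnivPiIso L _)))
  refine ⟨j, fun u hu j' hj' => ?_⟩
  have := hj j' hj'
  exact congrArg Subtype.val (Subsingleton.elim (α := eval j' '' T)
    ⟨Φ u j', Φ u, mem_image_of_mem _ hu, rfl⟩
    ⟨Φ a j', Φ a, mem_image_of_mem _ (mem_layer_self a i), rfl⟩)

end Digraph

open Digraph in
theorem prime_factorization_unique_general {V : Type u} (G : Digraph V)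
    (hul : ∃ v, ¬ G.Adj v v)
    {k l : ℕ} {W : Fin k → Type u} {X : Fin l → Type u}
    (Gs : ∀ i, Digraph (W i)) (Hs : ∀ j, Digraph (X j))
    (hGs : ∀ i, (Gs i).IsPrime) (hHs : ∀ j, (Hs j).IsPrime)
    (h₁ : Nonempty (G.Iso (Digraph.prodFam Gs)))
    (h₂ : Nonempty (G.Iso (Digraph.prodFam Hs))) :
    ∃ h : k = l, ∃ σ : Equiv.Perm (Fin k),
      ∀ i, Nonempty ((Gs i).Iso (Hs (Fin.cast h (σ i)))) := by
  obtain ⟨v, hv⟩ := hul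
  obtain ⟨e₁⟩ := h₁
  obtain ⟨e₂⟩ := h₂
  set Φ : (prodFam Gs).Iso (prodFam Hs) := e₁.symm.trans e₂
  set a := e₁ v
  have ha : ¬ (prodFam Gs).Adj a a := fun h => hv (e₁.map_rel_iff.mp h)
  have hb : ¬ (prodFam Hs).Adj (Φ a) (Φ a) := fun h => ha (Φ.map_rel_iff.mp h)
  choose f hf using fun i => exists_mapsTo_layer (fun i => (hGs i).1) (fun j => (hHs j).1) Φ
    (not_adj_apply_self_of_prodFam ha) (hGs i)
  choose g hg using fun j => exists_mapsTo_layer (fun j => (hHs j).1) (fun i => (hGs i).1) Φ.symm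
    (not_adj_apply_self_of_prodFam hb) (hHs j)
  simp only [RelIso.symm_apply_apply] at hg
  have gf : ∀ i, g (f i) = i := fun i =>
    have := (hGs i).2.1
    (eq_of_layer_subset_layer fun u hu => by simpa using hg (f i) (hf i hu)).symm
  have fg : ∀ j, f (g j) = j := fun j =>
    have := (hHs j).2.1
    (eq_of_layer_subset_layer fun u hu => by simpa using hf (g j) (hg j hu)).symm
  let τ : Fin k ≃ Fin l := ⟨f, g, gf, fg⟩
  have hkl : k = l := Fin.equiv_iff_eq.mp ⟨τ⟩
  refine ⟨hkl, τ.trans (finCongr hkl.symm), fun i => ?_⟩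
  have hmem : ∀ u, u ∈ layer a i ↔ Φ u ∈ layer (Φ a) (f i) := fun u =>
    ⟨fun hu => hf i hu, fun hu => by simpa [gf] using hg (f i) hu⟩
  exact ⟨(layerIso Gs (not_adj_apply_self_of_prodFam ha) i).trans
    ((Φ.restrict hmem).trans (layerIso Hs (not_adj_apply_self_of_prodFam hb) (f i)).symm)⟩

/-- Uniqueness of prime factorization for finite connected digraphs with an unlooped
vertex: two prime factorizations have the same number of factors and the factors agree
up to a permutation and isomorphism. -/
theorem prime_factorization_unique {V : Type u} [Fintype V] (G : Digraph V)
    (hconn : G.Connected) (hul : ∃ v, ¬ G.Adj v v)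
    {k l : ℕ} {W : Fin k → Type u} {X : Fin l → Type u}
    (Gs : ∀ i, Digraph (W i)) (Hs : ∀ j, Digraph (X j))
    (hGs : ∀ i, (Gs i).IsPrime) (hHs : ∀ j, (Hs j).IsPrime)
    (h₁ : Nonempty (G.Iso (Digraph.prodFam Gs)))
    (h₂ : Nonempty (G.Iso (Digraph.prodFam Hs))) :
    ∃ h : k = l, ∃ σ : Equiv.Perm (Fin k),
      ∀ i, Nonempty ((Gs i).Iso (Hs (Fin.cast h (σ i)))) :=
  prime_factorization_unique_general G hul Gs Hs hGs hHs h₁ h₂
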